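/- arXiv:1402.3327 — 2 statements merged into one kernel-verified Lean document; each statement's English description precedes it below -/
import Mathlib

section
/- Let η, ν be real skew-symmetric 3×3 matrices with 2‖η‖₂ + ‖ν‖₂ < 1, where ‖·‖₂ is the matrix operator 2-norm. Then the Cayley transforms Cay(η) = (I − η)(I + η)⁻¹ and Cay(ν) = (I − ν)(I + ν)⁻¹ satisfy ‖Cay(η) − Cay(ν)‖₂ ≤ C ‖η − ν‖₂, where C = (1 − ‖ν‖₂)⁻¹ + (1 − ‖η‖₂)⁻¹(1 − ‖ν‖₂)⁻¹(1 − 2‖η‖₂ − ‖ν‖₂)⁻¹. -/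
open scoped Matrix.Norms.L2Operator

/-!
Since `1 - x = 2 - (1 + x)`, the Cayley transform is `2 (1 + x)⁻¹ - 1`, so
`Cay η - Cay ν = 2 (1 + η)⁻¹ (ν - η) (1 + ν)⁻¹`. The bound
`‖(1 + x)⁻¹‖ ≤ (1 - ‖x‖)⁻¹` for `‖x‖ < 1` then gives the Lipschitz constant `2 (1 - ‖η‖)⁻¹ (1 - ‖ν‖)⁻¹`,
which is at most `C` because `(1 + ‖η‖)(1 - 2‖η‖ - ‖ν‖) ≤ 1`.
-/

section NormedRing

variable {R : Type*} [NormedRing R]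

lemma isUnit_one_add_of_norm_lt_one [CompleteSpace R] {x : R} (h : ‖x‖ < 1) : IsUnit (1 + x) := by
  simpa using isUnit_one_sub_of_norm_lt_one (x := -x) (by rwa [norm_neg])

-- `X = (1 + x)⁻¹` satisfies `X = 1 - x X`, hence `‖X‖ ≤ 1 + ‖x‖ ‖X‖`.
lemma norm_inverse_one_add_le [NormOneClass R] [CompleteSpace R] {x : R} (h : ‖x‖ < 1) :
    ‖Ring.inverse (1 + x)‖ ≤ (1 - ‖x‖)⁻¹ := by
  set X := Ring.inverse (1 + x)
  have hX : X = 1 - x * X := by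
    rw [eq_sub_iff_add_eq, ← one_add_mul, Ring.mul_inverse_cancel _ (isUnit_one_add_of_norm_lt_one h)]
  have hle : ‖X‖ ≤ 1 + ‖x‖ * ‖X‖ := calc
    ‖X‖ = ‖1 - x * X‖ := congrArg norm hX
    _ ≤ ‖(1 : R)‖ + ‖x * X‖ := norm_sub_le _ _
    _ ≤ 1 + ‖x‖ * ‖X‖ := by rw [norm_one]; gcongr; exact norm_mul_le _ _
  rw [← one_div, le_div_iff₀ (sub_pos.mpr h)]
  linarith

-- `Ring.inverse` agrees with the matrix inverse `⁻¹` (`Matrix.nonsing_inv_eq_ringInverse`).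
noncomputable def cayley (x : R) : R := (1 - x) * Ring.inverse (1 + x)

lemma cayley_eq_two_mul_inverse_sub_one {x : R} (hx : IsUnit (1 + x)) :
    cayley x = 2 * Ring.inverse (1 + x) - 1 := by
  rw [cayley, show 1 - x = 2 - (1 + x) by rw [← one_add_one_eq_two]; abel, sub_mul,
    Ring.mul_inverse_cancel _ hx]

lemma cayley_sub_cayley {x y : R} (hx : IsUnit (1 + x)) (hy : IsUnit (1 + y)) :
    cayley x - cayley y = 2 * (Ring.inverse (1 + x) * (y - x) * Ring.inverse (1 + y)) := by
  rw [cayley_eq_two_mul_inverse_sub_one hx, cayley_eq_two_mul_inverse_sub_one hy,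
    sub_sub_sub_cancel_right, ← mul_sub, Ring.inverse_sub_inverse (iff_of_true hx hy),
    add_sub_add_left_eq_sub]

lemma norm_cayley_sub_cayley_le [NormOneClass R] [CompleteSpace R] {x y : R}
    (hx : ‖x‖ < 1) (hy : ‖y‖ < 1) :
    ‖cayley x - cayley y‖ ≤ 2 * (1 - ‖x‖)⁻¹ * (1 - ‖y‖)⁻¹ * ‖x - y‖ := by
  rw [cayley_sub_cayley (isUnit_one_add_of_norm_lt_one hx) (isUnit_one_add_of_norm_lt_one hy),
    two_mul]
  have hX := norm_inverse_one_add_le hx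
  have hY := norm_inverse_one_add_le hy
  have hZ : ‖Ring.inverse (1 + x) * (y - x) * Ring.inverse (1 + y)‖
      ≤ (1 - ‖x‖)⁻¹ * ‖x - y‖ * (1 - ‖y‖)⁻¹ := by
    rw [← norm_neg (x - y), neg_sub]
    refine (norm_mul₃_le ..).trans ?_
    gcongr
  calc _ ≤ _ := norm_add_le _ _
    _ ≤ _ := add_le_add hZ hZ
    _ = _ := by ring

end NormedRing

lemma cayley_lipschitz_constant_le {a b : ℝ} (ha : 0 ≤ a) (hb : 0 ≤ b) (hab : 2 * a + b < 1) :
    2 * (1 - a)⁻¹ * (1 - b)⁻¹ ≤ (1 - b)⁻¹ + (1 - a)⁻¹ * (1 - b)⁻¹ * (1 - 2 * a - b)⁻¹ := by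
  have h1 : 0 < 1 - a := by linarith
  have h2 : 0 < 1 - b := by linarith
  have h3 : 0 < 1 - 2 * a - b := by linarith
  have h3_inv : 1 + a ≤ (1 - 2 * a - b)⁻¹ := by
    rw [← one_div, le_div_iff₀ h3]
    nlinarith
  calc 2 * (1 - a)⁻¹ * (1 - b)⁻¹
      = (1 - a)⁻¹ * (1 - b)⁻¹ * (1 - a) + (1 - a)⁻¹ * (1 - b)⁻¹ * (1 + a) := by ring
    _ = (1 - b)⁻¹ + (1 - a)⁻¹ * (1 - b)⁻¹ * (1 + a) := by
      rw [mul_right_comm, inv_mul_cancel₀ h1.ne', one_mul]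
    _ ≤ _ := by gcongr

theorem stmt_3_general (η ν : Matrix (Fin 3) (Fin 3) ℝ)
    (hnorm : 2 * ‖η‖ + ‖ν‖ < 1) :
    ‖(1 - η) * (1 + η)⁻¹ - (1 - ν) * (1 + ν)⁻¹‖ ≤
      ((1 - ‖ν‖)⁻¹ + (1 - ‖η‖)⁻¹ * (1 - ‖ν‖)⁻¹ * (1 - 2 * ‖η‖ - ‖ν‖)⁻¹) *
        ‖η - ν‖ := by
  have hη : ‖η‖ < 1 := by linarith [norm_nonneg ν]
  have hν : ‖ν‖ < 1 := by linarith [norm_nonneg η]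
  simp only [Matrix.nonsing_inv_eq_ringInverse]
  calc _ ≤ 2 * (1 - ‖η‖)⁻¹ * (1 - ‖ν‖)⁻¹ * ‖η - ν‖ := norm_cayley_sub_cayley_le hη hν
    _ ≤ _ := by
      gcongr
      exact cayley_lipschitz_constant_le (norm_nonneg η) (norm_nonneg ν) hnorm

/-- Lipschitz-type chart conditioning bound for the Cayley transform on `so(3)`:
for skew-symmetric `η, ν` with `2‖η‖₂ + ‖ν‖₂ < 1`,
`‖Cay(η) − Cay(ν)‖₂ ≤ C ‖η − ν‖₂` with
`C = (1 − ‖ν‖)⁻¹ + (1 − ‖η‖)⁻¹(1 − ‖ν‖)⁻¹(1 − 2‖η‖ − ‖ν‖)⁻¹`. -/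
theorem stmt_3 (η ν : Matrix (Fin 3) (Fin 3) ℝ)
    (hη : η.transpose = -η) (hν : ν.transpose = -ν)
    (hnorm : 2 * ‖η‖ + ‖ν‖ < 1) :
    ‖(1 - η) * (1 + η)⁻¹ - (1 - ν) * (1 + ν)⁻¹‖ ≤
      ((1 - ‖ν‖)⁻¹ + (1 - ‖η‖)⁻¹ * (1 - ‖ν‖)⁻¹ * (1 - 2 * ‖η‖ - ‖ν‖)⁻¹) *
        ‖η - ν‖ :=
  stmt_3_general η ν hnorm
end

section
/- Let S : X → ℝ be a functional on a normed space, twice Fréchet differentiable, with stationary point x̄ (the exact solution) satisfying coercivity |D²S(ξ)[δ][δ]| ≥ C_coer ‖δ‖² for all ξ, δ. If x̃ satisfies |S(x̄) − S(x̃)| ≤ C Kⁿ for constants C > 0, 0 < K < 1, then ‖x̄ − x̃‖ ≤ √(2C/C_coer) · (√K)ⁿ. -/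
/-!
Restrict `S` to the segment `t ↦ x̄ + t (x̃ - x̄)`. Taylor's theorem with Lagrange remainder, together
with `DS(x̄) = 0`, gives `S(x̃) - S(x̄) = D²S(ξ)[δ][δ] / 2` for some `ξ` on the segment, so coercivity
yields `C_coer ‖x̃ - x̄‖² ≤ 2 |S(x̄) - S(x̃)| ≤ 2 C Kⁿ`; taking square roots gives the bound.
-/

open Set

theorem Real.sqrt_pow {x : ℝ} (hx : 0 ≤ x) (n : ℕ) : √(x ^ n) = √x ^ n := by
  rw [← Real.sq_sqrt hx, ← pow_mul, mul_comm, pow_mul, Real.sqrt_sq (by positivity),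
    Real.sqrt_sq (Real.sqrt_nonneg x)]

section Segment

variable {X F : Type*} [NormedAddCommGroup X] [NormedSpace ℝ X]
  [NormedAddCommGroup F] [NormedSpace ℝ F]

theorem hasDerivAt_comp_add_smul {f : X → F} {x δ : X} {t : ℝ}
    (hf : DifferentiableAt ℝ f (x + t • δ)) :
    HasDerivAt (fun s : ℝ => f (x + s • δ)) (fderiv ℝ f (x + t • δ) δ) t := by
  have hline : HasDerivAt (fun s : ℝ => x + s • δ) δ t := by
    simpa using ((hasDerivAt_id t).smul_const δ).const_add x
  exact hf.hasFDerivAt.comp_hasDerivAt t hline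

theorem ContDiff.deriv_comp_add_smul {S : X → ℝ} (hS : ContDiff ℝ 2 S) (x δ : X) :
    deriv (fun s : ℝ => S (x + s • δ)) = fun t => fderiv ℝ S (x + t • δ) δ :=
  funext fun _ => (hasDerivAt_comp_add_smul (hS.differentiable two_ne_zero _)).deriv

theorem ContDiff.iteratedDeriv_two_comp_add_smul {S : X → ℝ} (hS : ContDiff ℝ 2 S) (x δ : X)
    (t : ℝ) :
    iteratedDeriv 2 (fun s : ℝ => S (x + s • δ)) t = fderiv ℝ (fderiv ℝ S) (x + t • δ) δ δ := by
  have hDS : Differentiable ℝ (fderiv ℝ S) :=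
    (hS.fderiv_right (by norm_num)).differentiable one_ne_zero
  rw [iteratedDeriv_succ, iteratedDeriv_one, hS.deriv_comp_add_smul]
  exact ((hasDerivAt_comp_add_smul (hDS _)).clm_apply (hasDerivAt_const t δ)).deriv.trans
    (by simp)

theorem ContDiff.exists_eq_add_fderiv_add_half_fderiv_fderiv {S : X → ℝ} (hS : ContDiff ℝ 2 S)
    (x δ : X) :
    ∃ c ∈ Ioo (0 : ℝ) 1, S (x + δ) =
      S x + fderiv ℝ S x δ + fderiv ℝ (fderiv ℝ S) (x + c • δ) δ δ / 2 := by
  set g : ℝ → ℝ := fun s => S (x + s • δ)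
  have hg : ContDiff ℝ 2 g := hS.comp (contDiff_const.add (contDiff_id.smul contDiff_const))
  obtain ⟨c, hc, htaylor⟩ :=
    taylor_mean_remainder_lagrange_iteratedDeriv (f := g) (n := 1) zero_ne_one hg.contDiffOn
  rw [uIoo_of_le zero_le_one] at hc
  have hpoly : taylorWithinEval g 1 (uIcc 0 1) 0 1 = S x + fderiv ℝ S x δ := by
    have hderiv : derivWithin g (uIcc 0 1) 0 = fderiv ℝ S x δ := by
      rw [(hg.differentiable two_ne_zero 0).derivWithin
        (uniqueDiffOn_uIcc zero_ne_one 0 (by simp)), hS.deriv_comp_add_smul]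
      simp
    rw [taylorWithinEval_succ, taylor_within_zero_eval, iteratedDerivWithin_one, hderiv]
    simp [g]
  refine ⟨c, hc, ?_⟩
  rw [hpoly, hS.iteratedDeriv_two_comp_add_smul] at htaylor
  norm_num [g, Nat.factorial] at htaylor
  linarith

theorem ContDiff.mul_norm_sub_sq_le_of_fderiv_eq_zero {S : X → ℝ} (hS : ContDiff ℝ 2 S)
    {x : X} (hx : fderiv ℝ S x = 0) {c : ℝ}
    (hcoer : ∀ ξ δ : X, c * ‖δ‖ ^ 2 ≤ |fderiv ℝ (fderiv ℝ S) ξ δ δ|) (y : X) :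
    c * ‖y - x‖ ^ 2 ≤ 2 * |S y - S x| := by
  obtain ⟨t, -, htaylor⟩ := hS.exists_eq_add_fderiv_add_half_fderiv_fderiv x (y - x)
  rw [add_sub_cancel, hx, zero_apply, add_zero] at htaylor
  calc c * ‖y - x‖ ^ 2 ≤ |fderiv ℝ (fderiv ℝ S) (x + t • (y - x)) (y - x) (y - x)| := hcoer _ _
    _ = 2 * |S y - S x| := by rw [htaylor, add_sub_cancel_left, abs_div]; norm_num; ring

end Segment

theorem stmt_15_general (X : Type*) [NormedAddCommGroup X] [NormedSpace ℝ X]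
    (S : X → ℝ) (hS : ContDiff ℝ 2 S) (xbar xtil : X)
    (Ccoer C K : ℝ) (hCcoer : 0 < Ccoer) (hK0 : 0 < K)
    (n : ℕ)
    (hstat : fderiv ℝ S xbar = 0)
    (hcoer : ∀ ξ : X, ∀ δ : X, |fderiv ℝ (fderiv ℝ S) ξ δ δ| ≥ Ccoer * ‖δ‖ ^ 2)
    (hclose : |S xbar - S xtil| ≤ C * K ^ n) :
    ‖xbar - xtil‖ ≤ Real.sqrt (2 * C / Ccoer) * Real.sqrt K ^ n := by
  have hcoer_dist := hS.mul_norm_sub_sq_le_of_fderiv_eq_zero hstat hcoer xtil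
  rw [norm_sub_rev, abs_sub_comm] at hcoer_dist
  have hsq : ‖xbar - xtil‖ ^ 2 ≤ 2 * C / Ccoer * K ^ n := by
    rw [div_mul_eq_mul_div, le_div_iff₀ hCcoer]
    linarith
  rw [← Real.sqrt_pow hK0.le, ← Real.sqrt_mul' _ (by positivity)]
  exact Real.le_sqrt_of_sq_le hsq

/-- Galerkin curve convergence: if `x̄` is a stationary point of a twice Fréchet
differentiable functional `S` whose second derivative is uniformly coercive,
`|D²S(ξ)[δ][δ]| ≥ C_coer ‖δ‖²`, and `x̃` satisfies `|S(x̄) − S(x̃)| ≤ C Kⁿ`,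
then `‖x̄ − x̃‖ ≤ √(2C/C_coer) (√K)ⁿ`. -/
theorem stmt_15 (X : Type*) [NormedAddCommGroup X] [NormedSpace ℝ X]
    (S : X → ℝ) (hS : ContDiff ℝ 2 S) (xbar xtil : X)
    (Ccoer C K : ℝ) (hCcoer : 0 < Ccoer) (hC : 0 < C) (hK0 : 0 < K) (hK1 : K < 1)
    (n : ℕ)
    (hstat : fderiv ℝ S xbar = 0)
    (hcoer : ∀ ξ : X, ∀ δ : X, |fderiv ℝ (fderiv ℝ S) ξ δ δ| ≥ Ccoer * ‖δ‖ ^ 2)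
    (hclose : |S xbar - S xtil| ≤ C * K ^ n) :
    ‖xbar - xtil‖ ≤ Real.sqrt (2 * C / Ccoer) * Real.sqrt K ^ n :=
  stmt_15_general X S hS xbar xtil Ccoer C K hCcoer hK0 n hstat hcoer hclose
end
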